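/- Let k be a commutative ring and A a non-degenerate idempotent k-algebra, projective as a k-module. Suppose given for every a ∈ A a multiplier (Λ_a, Ρ_a) of the k-algebra A ⊗ A, depending k-linearly on a and multiplicatively (Λ_{aa'} = Λ_a∘Λ_{a'} and Ρ_{aa'} = Ρ_{a'}∘Ρ_a), such that A ⊗ A is non-degenerate and idempotent both as a left A-module via a·u := Λ_a(u) and as a right A-module via u·a := Ρ_a(u). Then for any two non-degenerate idempotent right A-modules M and N that are projective as k-modules, the formula (m⊗n)·a := Σ_{i,j} (mᵢ⊗nⱼ)·Ρ_a(aᵢ⊗bⱼ), taken over any representations m = Σᵢ mᵢ·aᵢ and n = Σⱼ nⱼ·bⱼ, is a well-defined right A-action on M ⊗ N, and with this action M ⊗ N is a non-degenerate idempotent right A-module. -/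

import Mathlib

/-!
Let `Ψ : M ⊗ N → Hom(A ⊗ A, M ⊗ N)` be the factorwise action `(m ⊗ n)·(a ⊗ b) = m·a ⊗ n·b`.
Since `M` and `N` are projective, non-degeneracy passes to tensor products, so `Ψ` is injective;
and `M ⊗ N` is an idempotent `A ⊗ A`-module. For a multiplier `(Λ, Ρ)` the map `Ψ(x) ∘ Λ` is again
of the form `Ψ(y)`: on generators `x = z·u` one has `Ψ(z·u) ∘ Λ = Ψ(z·Ρ(u))` by `u Λ(v) = Ρ(u) v`.
Hence `Ψ(x·a) = Ψ(x) ∘ Λ_a` defines the action, and its associativity, non-degeneracy and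
idempotency come from multiplicativity of `Λ` and from idempotency of `A ⊗ A` via `Λ` and via `Ρ`.
The defining formula is the case `x = Σ (mᵢ ⊗ nⱼ)·(aᵢ ⊗ bⱼ)`.
-/

open TensorProduct

variable (k : Type*) [CommRing k]

/-- `(l, r)` is a multiplier of the k-module `C` with respect to the (bilinear)
multiplication `mu`. -/
def IsMultiplierVia {C : Type*} [AddCommGroup C] [Module k C]
    (mu : C →ₗ[k] C →ₗ[k] C) (l r : C →ₗ[k] C) : Prop :=
  (∀ u v : C, l (mu u v) = mu (l u) v) ∧
  (∀ u v : C, r (mu u v) = mu u (r v)) ∧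
  (∀ u v : C, mu u (l v) = mu (r u) v)

theorem AddSubmonoid.apply_mem_of_mem_closure {M N F : Type*} [AddMonoid M] [AddMonoid N]
    [FunLike F M N] [AddMonoidHomClass F M N] (f : F) {s : Set M} {T : AddSubmonoid N} {u : M}
    (hu : u ∈ closure s) (hs : ∀ v ∈ s, f v ∈ T) : f u ∈ T :=
  (closure_le (S := T.comap f)).mpr hs hu

theorem LinearMap.list_sum_map_list_sum_map {R M N P α β : Type*} [CommSemiring R]
    [AddCommMonoid M] [AddCommMonoid N] [AddCommMonoid P] [Module R M] [Module R N] [Module R P]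
    (f : M →ₗ[R] N →ₗ[R] P) (L₁ : List α) (L₂ : List β) (g₁ : α → M) (g₂ : β → N) :
    f (L₁.map g₁).sum (L₂.map g₂).sum =
      (L₁.map fun p => (L₂.map fun q => f (g₁ p) (g₂ q)).sum).sum := by
  induction L₁ with
  | nil => simp
  | cons p L ih =>
    rw [List.map_cons, List.sum_cons, map_add, LinearMap.add_apply, ih, map_list_sum, List.map_map,
      List.map_cons, List.sum_cons]
    rfl

namespace TensorProduct

variable {R : Type*} [CommRing R]

theorem finsuppScalarLeft_lTensor_apply {ι N P : Type*} [DecidableEq ι] [AddCommGroup N]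
    [Module R N] [AddCommGroup P] [Module R P] (φ : N →ₗ[R] P) (x : (ι →₀ R) ⊗[R] N) (i : ι) :
    finsuppScalarLeft R P ι (φ.lTensor (ι →₀ R) x) i = φ (finsuppScalarLeft R N ι x i) := by
  induction x using TensorProduct.induction_on with
  | zero => simp
  | tmul p n => simp [finsuppScalarLeft_apply_tmul_apply]
  | add x y hx hy => simp [hx, hy]

/-- `M` is a retract of the free module `M →₀ R`, and `(M →₀ R) ⊗ N ≃ (M →₀ N)` is tested
coordinatewise. -/
theorem eq_zero_of_forall_lTensor_eq_zero {ι M N P : Type*} [AddCommGroup M] [Module R M]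
    [Module.Projective R M] [AddCommGroup N] [Module R N] [AddCommGroup P] [Module R P]
    (ψ : ι → N →ₗ[R] P) (hψ : ∀ n : N, (∀ i, ψ i n = 0) → n = 0) (z : M ⊗[R] N)
    (hz : ∀ i, (ψ i).lTensor M z = 0) : z = 0 := by
  classical
  obtain ⟨s, hs⟩ := Module.projective_def'.mp ‹Module.Projective R M›
  have hfree : s.rTensor N z = 0 := by
    refine (finsuppScalarLeft R N M).map_eq_zero_iff.mp (Finsupp.ext fun m => hψ _ fun i => ?_)
    rw [← finsuppScalarLeft_lTensor_apply, ← LinearMap.comp_apply, LinearMap.lTensor_comp_rTensor,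
      ← LinearMap.rTensor_comp_lTensor, LinearMap.comp_apply, hz, map_zero, map_zero,
      Finsupp.zero_apply]
  simpa [← LinearMap.comp_apply, ← LinearMap.rTensor_comp, hs] using
    congrArg ((Finsupp.linearCombination R (id : M → M)).rTensor N) hfree

theorem eq_zero_of_forall_rTensor_eq_zero {ι M N P : Type*} [AddCommGroup M] [Module R M]
    [AddCommGroup N] [Module R N] [Module.Projective R N] [AddCommGroup P] [Module R P]
    (ψ : ι → M →ₗ[R] P) (hψ : ∀ m : M, (∀ i, ψ i m = 0) → m = 0) (z : M ⊗[R] N)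
    (hz : ∀ i, (ψ i).rTensor N z = 0) : z = 0 := by
  refine (TensorProduct.comm R M N).map_eq_zero_iff.mp
    (eq_zero_of_forall_lTensor_eq_zero ψ hψ _ fun i => ?_)
  rw [LinearMap.lTensor_comm, hz, map_zero]

end TensorProduct

section TensorAction

variable {k}
variable {A M N : Type*} [AddCommGroup M] [Module k M] [AddCommGroup N] [Module k N]

theorem map₂_map₂_mul [NonUnitalNonAssocSemiring A] [Module k A] [SMulCommClass k A A]
    [IsScalarTower k A A] {actM : M →ₗ[k] A →ₗ[k] M} {actN : N →ₗ[k] A →ₗ[k] N}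
    (hMassoc : ∀ (m : M) (a a' : A), actM (actM m a) a' = actM m (a * a'))
    (hNassoc : ∀ (n : N) (a a' : A), actN (actN n a) a' = actN n (a * a'))
    (x : M ⊗[k] N) (u v : A ⊗[k] A) :
    map₂ actM actN (map₂ actM actN x u) v =
      map₂ actM actN x (map₂ (LinearMap.mul k A) (LinearMap.mul k A) u v) := by
  induction x using TensorProduct.induction_on with
  | zero => simp
  | add x y hx hy => simp only [map_add, LinearMap.add_apply, hx, hy]
  | tmul m n =>
    induction u using TensorProduct.induction_on with
    | zero => simp
    | add u u' hu hu' => simp only [map_add, LinearMap.add_apply, hu, hu']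
    | tmul a b =>
      induction v using TensorProduct.induction_on with
      | zero => simp
      | add v v' hv hv' => simp only [map_add, hv, hv']
      | tmul c d => simp [hMassoc, hNassoc]

variable [AddCommGroup A] [Module k A] {actM : M →ₗ[k] A →ₗ[k] M} {actN : N →ₗ[k] A →ₗ[k] N}

theorem map₂_apply_tmul_eq_map (x : M ⊗[k] N) (a b : A) :
    map₂ actM actN x (a ⊗ₜ b) = map (actM.flip a) (actN.flip b) x := by
  induction x using TensorProduct.induction_on with
  | zero => simp
  | add x y hx hy => simp only [map_add, LinearMap.add_apply, hx, hy]
  | tmul m n => simp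

theorem map₂_injective [Module.Projective k M] [Module.Projective k N]
    (hMnd : ∀ m : M, (∀ a : A, actM m a = 0) → m = 0)
    (hNnd : ∀ n : N, (∀ a : A, actN n a = 0) → n = 0) :
    Function.Injective (map₂ actM actN) := by
  refine (injective_iff_map_eq_zero _).mpr fun x hx => ?_
  refine eq_zero_of_forall_lTensor_eq_zero actN.flip hNnd x fun b => ?_
  refine eq_zero_of_forall_rTensor_eq_zero actM.flip hMnd _ fun a => ?_
  rw [← LinearMap.comp_apply, LinearMap.rTensor_comp_lTensor, ← map₂_apply_tmul_eq_map, hx,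
    LinearMap.zero_apply]

theorem mem_closure_map₂
    (hMid : ∀ m : M, m ∈ AddSubmonoid.closure {x : M | ∃ (m' : M) (a : A), x = actM m' a})
    (hNid : ∀ n : N, n ∈ AddSubmonoid.closure {x : N | ∃ (n' : N) (a : A), x = actN n' a})
    (x : M ⊗[k] N) :
    x ∈ AddSubmonoid.closure {y | ∃ (z : M ⊗[k] N) (u : A ⊗[k] A), y = map₂ actM actN z u} := by
  induction x using TensorProduct.induction_on with
  | zero => exact zero_mem _
  | add x y hx hy => exact add_mem hx hy
  | tmul m n =>
    refine AddSubmonoid.apply_mem_of_mem_closure ((TensorProduct.mk k M N).flip n) (hMid m) ?_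
    rintro _ ⟨m', a, rfl⟩
    refine AddSubmonoid.apply_mem_of_mem_closure (TensorProduct.mk k M N (actM m' a)) (hNid n) ?_
    rintro _ ⟨n', b, rfl⟩
    exact AddSubmonoid.subset_closure ⟨m' ⊗ₜ n', a ⊗ₜ b, by simp⟩

end TensorAction

section InducedAction

variable {k}
variable {B X A : Type*} [AddCommGroup B] [Module k B] [AddCommGroup X] [Module k X]
  [AddCommGroup A] [Module k A] {mu : B →ₗ[k] B →ₗ[k] B} {act : X →ₗ[k] B →ₗ[k] X}

def IsInducedAction (act : X →ₗ[k] B →ₗ[k] X) (D : A →ₗ[k] (B →ₗ[k] B) × (B →ₗ[k] B))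
    (E : X →ₗ[k] A →ₗ[k] X) : Prop :=
  ∀ x a, act (E x a) = act x ∘ₗ (D a).1

theorem act_act_comp_eq_act_act (hassoc : ∀ x u v, act (act x u) v = act x (mu u v))
    {l r : B →ₗ[k] B} (hlr : ∀ u v, mu u (l v) = mu (r u) v) (z : X) (u : B) :
    act (act z u) ∘ₗ l = act (act z (r u)) := by
  ext v
  rw [LinearMap.comp_apply, hassoc, hlr, ← hassoc]

theorem act_comp_mem_range (hassoc : ∀ x u v, act (act x u) v = act x (mu u v))
    (hid : ∀ x, x ∈ AddSubmonoid.closure {y | ∃ z u, y = act z u})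
    {l r : B →ₗ[k] B} (hlr : ∀ u v, mu u (l v) = mu (r u) v) (x : X) :
    act x ∘ₗ l ∈ LinearMap.range act := by
  refine AddSubmonoid.apply_mem_of_mem_closure (LinearMap.lcomp k X l ∘ₗ act)
    (T := (LinearMap.range act).toAddSubmonoid) (hid x) ?_
  rintro _ ⟨z, u, rfl⟩
  exact ⟨act z (r u), (act_act_comp_eq_act_act hassoc hlr z u).symm⟩

theorem exists_isInducedAction (hinj : Function.Injective act)
    (hassoc : ∀ x u v, act (act x u) v = act x (mu u v))
    (hid : ∀ x, x ∈ AddSubmonoid.closure {y | ∃ z u, y = act z u})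
    (D : A →ₗ[k] (B →ₗ[k] B) × (B →ₗ[k] B)) (hD : ∀ a u v, mu u ((D a).1 v) = mu ((D a).2 u) v) :
    ∃ E, IsInducedAction act D E :=
  ⟨LinearMap.codRestrict₂ ((LinearMap.llcomp k B B X ∘ₗ act).compl₂ (LinearMap.fst k _ _ ∘ₗ D))
      act hinj fun x a => act_comp_mem_range hassoc hid (hD a) x,
    fun _ _ => LinearMap.codRestrict₂_apply _ _ _ _ _ _⟩

namespace IsInducedAction

variable {D : A →ₗ[k] (B →ₗ[k] B) × (B →ₗ[k] B)} {E : X →ₗ[k] A →ₗ[k] X}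

theorem apply_act (hE : IsInducedAction act D E) (hinj : Function.Injective act)
    (hassoc : ∀ x u v, act (act x u) v = act x (mu u v))
    (hD : ∀ a u v, mu u ((D a).1 v) = mu ((D a).2 u) v) (z : X) (u : B) (a : A) :
    E (act z u) a = act z ((D a).2 u) :=
  hinj <| by rw [hE, act_act_comp_eq_act_act hassoc (hD a)]

theorem apply_apply [Mul A] (hE : IsInducedAction act D E) (hinj : Function.Injective act)
    (hDmul : ∀ a a', (D (a * a')).1 = (D a).1 ∘ₗ (D a').1) (x : X) (a a' : A) :
    E (E x a) a' = E x (a * a') :=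
  hinj <| by rw [hE, hE, hE, hDmul, LinearMap.comp_assoc]

theorem eq_zero_of_forall_apply_eq_zero (hE : IsInducedAction act D E)
    (hinj : Function.Injective act)
    (hDid : ∀ u, u ∈ AddSubmonoid.closure {v | ∃ a w, v = (D a).1 w}) (x : X)
    (hx : ∀ a, E x a = 0) : x = 0 := by
  refine (injective_iff_map_eq_zero act).mp hinj x (LinearMap.ext fun u => ?_)
  refine AddSubmonoid.apply_mem_of_mem_closure (act x) (T := ⊥) (hDid u) ?_
  rintro _ ⟨a, w, rfl⟩
  rw [AddSubmonoid.mem_bot, ← LinearMap.comp_apply, ← hE, hx, map_zero, LinearMap.zero_apply]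

theorem mem_closure (hE : IsInducedAction act D E) (hinj : Function.Injective act)
    (hassoc : ∀ x u v, act (act x u) v = act x (mu u v))
    (hid : ∀ x, x ∈ AddSubmonoid.closure {y | ∃ z u, y = act z u})
    (hD : ∀ a u v, mu u ((D a).1 v) = mu ((D a).2 u) v)
    (hDid : ∀ u, u ∈ AddSubmonoid.closure {v | ∃ a w, v = (D a).2 w}) (x : X) :
    x ∈ AddSubmonoid.closure {y | ∃ z a, y = E z a} := by
  refine AddSubmonoid.closure_le.mpr ?_ (hid x)
  rintro _ ⟨z, u, rfl⟩
  refine AddSubmonoid.apply_mem_of_mem_closure (act z) (hDid u) ?_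
  rintro _ ⟨a, w, rfl⟩
  exact AddSubmonoid.subset_closure ⟨act z w, a, (hE.apply_act hinj hassoc hD z w a).symm⟩

end IsInducedAction

end InducedAction

theorem stmt_14
    (A : Type*) [NonUnitalRing A] [Module k A] [SMulCommClass k A A] [IsScalarTower k A A]
    -- the comultiplication data: a family of multipliers of `A ⊗ A`
    (D : A →ₗ[k] (A ⊗[k] A →ₗ[k] A ⊗[k] A) × (A ⊗[k] A →ₗ[k] A ⊗[k] A))
    (hDmult : ∀ a : A,
      IsMultiplierVia k (TensorProduct.map₂ (LinearMap.mul k A) (LinearMap.mul k A))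
        (D a).1 (D a).2)
    (hDhom₁ : ∀ a a' : A, (D (a * a')).1 = (D a).1 ∘ₗ (D a').1)
    -- `A ⊗ A` is a non-degenerate idempotent left `A`-module via `Λ` ...
    (hlid : ∀ u : A ⊗[k] A,
      u ∈ AddSubmonoid.closure {v : A ⊗[k] A | ∃ (a : A) (w : A ⊗[k] A), v = (D a).1 w})
    -- ... and a non-degenerate idempotent right `A`-module via `Ρ`
    (hrid : ∀ u : A ⊗[k] A,
      u ∈ AddSubmonoid.closure {v : A ⊗[k] A | ∃ (a : A) (w : A ⊗[k] A), v = (D a).2 w})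
    -- `M` and `N` are non-degenerate idempotent k-projective right `A`-modules
    (M : Type*) [AddCommGroup M] [Module k M] [Module.Projective k M]
    (actM : M →ₗ[k] A →ₗ[k] M)
    (hMassoc : ∀ (m : M) (a a' : A), actM (actM m a) a' = actM m (a * a'))
    (hMnd : ∀ m : M, (∀ a : A, actM m a = 0) → m = 0)
    (hMid : ∀ m : M, m ∈ AddSubmonoid.closure {x : M | ∃ (m' : M) (a : A), x = actM m' a})
    (N : Type*) [AddCommGroup N] [Module k N] [Module.Projective k N]
    (actN : N →ₗ[k] A →ₗ[k] N)
    (hNassoc : ∀ (n : N) (a a' : A), actN (actN n a) a' = actN n (a * a'))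
    (hNnd : ∀ n : N, (∀ a : A, actN n a = 0) → n = 0)
    (hNid : ∀ n : N, n ∈ AddSubmonoid.closure {x : N | ∃ (n' : N) (a : A), x = actN n' a}) :
    ∃ E : M ⊗[k] N →ₗ[k] A →ₗ[k] M ⊗[k] N,
      -- defining formula on representations
      (∀ (m : M) (n : N) (a : A) (Lm : List (M × A)) (Ln : List (N × A)),
        (Lm.map fun p => actM p.1 p.2).sum = m →
        (Ln.map fun q => actN q.1 q.2).sum = n →
        E (m ⊗ₜ[k] n) a =
          (Lm.map fun p =>
            (Ln.map fun q =>
              TensorProduct.map₂ actM actN (p.1 ⊗ₜ[k] q.1)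
                ((D a).2 (p.2 ⊗ₜ[k] q.2))).sum).sum) ∧
      -- it is an associative right `A`-action
      (∀ (x : M ⊗[k] N) (a a' : A), E (E x a) a' = E x (a * a')) ∧
      -- non-degenerate
      (∀ x : M ⊗[k] N, (∀ a : A, E x a = 0) → x = 0) ∧
      -- idempotent
      (∀ x : M ⊗[k] N,
        x ∈ AddSubmonoid.closure {y : M ⊗[k] N | ∃ (z : M ⊗[k] N) (a : A), y = E z a}) := by
  have hinj := map₂_injective hMnd hNnd
  have hassoc := map₂_map₂_mul hMassoc hNassoc
  have hid := mem_closure_map₂ hMid hNid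
  have hD a := (hDmult a).2.2
  obtain ⟨E, hE⟩ := exists_isInducedAction hinj hassoc hid D hD
  refine ⟨E, ?_, hE.apply_apply hinj hDhom₁, hE.eq_zero_of_forall_apply_eq_zero hinj hlid,
    hE.mem_closure hinj hassoc hid hD hrid⟩
  rintro m n a Lm Ln rfl rfl
  have hterm (m' : M) (n' : N) (b c : A) :
      map₂ actM actN (m' ⊗ₜ n') ((D a).2 (b ⊗ₜ c)) = E (actM m' b ⊗ₜ actN n' c) a := by
    rw [← hE.apply_act hinj hassoc hD, map₂_apply_tmul, map_tmul]
  simp only [hterm]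
  exact LinearMap.list_sum_map_list_sum_map ((TensorProduct.mk k M N).compr₂ (E.flip a)) _ _ _ _
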